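/- Let q = AB be a query with key̅(A) ≠ key̅(B), no homomorphism from A to B and no homomorphism from B to A. For a two-relation database D over R₁,R₂, define μ(a) for an R₁-fact a = (u₁,…,u_n) to be the R-fact ((A[1],u₁),…,(A[n],u_n)) and for an R₂-fact a = (u₁,…,u_n) to be the R-fact ((B[1],u₁),…,(B[n],u_n)), where the entries of these facts are pairs in Var × Elem (serving as elements), and let D' = {μ(a) : a ∈ D}. Then D ⊨ certain(sjf(q)) if and only if D' ⊨ certain(q). -/

import Mathlib

/- Consistent query answering framework: a single relation symbol of arity `n`
   whose first `l` positions form the primary key. Facts are `Fin n → Elem`,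
   atoms are `Fin n → Var`. -/

namespace CQA

/-- Key-equality: the tuples of the first `l` entries coincide. -/
def keyEq (l : ℕ) {n : ℕ} {α : Type*} (s t : Fin n → α) : Prop :=
  ∀ i : Fin n, (i : ℕ) < l → s i = t i

/-- The set of entries occurring in the first `l` (key) positions of a tuple. -/
def keySet (l : ℕ) {n : ℕ} {α : Type*} (t : Fin n → α) : Set α :=
  {x | ∃ i : Fin n, (i : ℕ) < l ∧ t i = x}

/-- The set of all entries of a tuple. -/
def varsSet {n : ℕ} {α : Type*} (t : Fin n → α) : Set α :=
  Set.range t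

/-- A (two-atom, Boolean, self-join) query `q = AB` is a pair of atoms. -/
abbrev Query (n : ℕ) (Var : Type*) := (Fin n → Var) × (Fin n → Var)

variable {n : ℕ} {Elem Var : Type*}

/-- The pair of facts `(a, b)` matches the two atoms of `q` via a single assignment `μ`. -/
def solPair (q : Query n Var) (a b : Fin n → Elem) : Prop :=
  ∃ μ : Var → Elem, (∀ i, μ (q.1 i) = a i) ∧ (∀ i, μ (q.2 i) = b i)

/-- `D ⊨ q(ab)` : `(a,b)` is a solution to `q` in `D`. -/
def Sol (q : Query n Var) (D : Set (Fin n → Elem)) (a b : Fin n → Elem) : Prop :=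
  a ∈ D ∧ b ∈ D ∧ solPair q a b

/-- `D ⊨ q{ab}` : `(a,b)` or `(b,a)` is a solution to `q` in `D`. -/
def SolSym (q : Query n Var) (D : Set (Fin n → Elem)) (a b : Fin n → Elem) : Prop :=
  Sol q D a b ∨ Sol q D b a

/-- The set `q(D)` of solutions to `q` in `D`. -/
def solSet (q : Query n Var) (D : Set (Fin n → Elem)) :
    Set ((Fin n → Elem) × (Fin n → Elem)) :=
  {p | Sol q D p.1 p.2}

/-- `D ⊨ q` : some solution to `q` exists in `D`. -/
def Sat (q : Query n Var) (D : Set (Fin n → Elem)) : Prop :=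
  ∃ a b, Sol q D a b

/-- A database is consistent if it contains no two distinct key-equal facts. -/
def Consistent (l : ℕ) (D : Set (Fin n → Elem)) : Prop :=
  ∀ a ∈ D, ∀ b ∈ D, keyEq l a b → a = b

/-- `r` is a repair of `D` : a maximal consistent subset of `D`. -/
def Repair (l : ℕ) (D r : Set (Fin n → Elem)) : Prop :=
  r ⊆ D ∧ Consistent l r ∧ ∀ s, r ⊆ s → s ⊆ D → Consistent l s → s = r

/-- `D ⊨ certain(q)` : all repairs of `D` satisfy `q`. -/
def Certain (l : ℕ) (q : Query n Var) (D : Set (Fin n → Elem)) : Prop :=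
  ∀ r, Repair l D r → Sat q r

/-- The block of the fact `a` in `D`: all facts of `D` key-equal to `a`. -/
def Block (l : ℕ) (D : Set (Fin n → Elem)) (a : Fin n → Elem) : Set (Fin n → Elem) :=
  {b ∈ D | keyEq l a b}

/-- A `k`-set of `D`: at most `k` facts of `D`, at most one from each block. -/
def kSet (l k : ℕ) (D S : Set (Fin n → Elem)) : Prop :=
  S ⊆ D ∧ S.Finite ∧ S.ncard ≤ k ∧ Consistent l S

/-- A collection `𝒮` of sets of facts is closed under the two rules defining `Δ_k(q,D)`:
  (i) every `k`-set satisfying `q` is in `𝒮`, and (ii) if for a `k`-set `S` there is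
  a block of `D` each of whose facts `u` admits a subset `S' ⊆ S ∪ {u}` that is a
  `k`-set belonging to `𝒮`, then `S ∈ 𝒮`. -/
def DeltaClosed (l k : ℕ) (q : Query n Var) (D : Set (Fin n → Elem))
    (𝒮 : Set (Set (Fin n → Elem))) : Prop :=
  (∀ S, kSet l k D S → Sat q S → S ∈ 𝒮) ∧
  (∀ S, kSet l k D S → (∃ x ∈ D, ∀ u ∈ D, keyEq l x u →
      ∃ S', S' ⊆ S ∪ {u} ∧ kSet l k D S' ∧ S' ∈ 𝒮) → S ∈ 𝒮)

/-- `Δ_k(q,D)`: the least collection of `k`-sets of `D` closed under the two rules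
(the intersection of all closed collections). -/
def Delta (l k : ℕ) (q : Query n Var) (D : Set (Fin n → Elem)) :
    Set (Set (Fin n → Elem)) :=
  ⋂₀ {𝒮 | DeltaClosed l k q D 𝒮}

/-- `q = AB` is 2way-determined. -/
def TwoWayDet (l : ℕ) (q : Query n Var) : Prop :=
  ¬ keySet l q.1 ⊆ keySet l q.2 ∧ ¬ keySet l q.2 ⊆ keySet l q.1 ∧
  keySet l q.1 ⊆ varsSet q.2 ∧ keySet l q.2 ⊆ varsSet q.1

/-- The zig-zag property of a query `q`, relative to databases over `Elem`. -/
def ZigZag (l : ℕ) (q : Query n Var) (Elem : Type*) : Prop :=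
  ∀ D : Set (Fin n → Elem), D.Finite →
    ∀ a b b' c : Fin n → Elem, a ∈ D → b ∈ D → b' ∈ D → c ∈ D →
      ¬ keyEq l a c → a ≠ b → keyEq l b b' →
      Sol q D a b → Sol q D c b' → Sol q D a b'

/-- `rkey(a, r)`: facts of `r` whose key entries are included in those of `a`. -/
def rkey (l : ℕ) (r : Set (Fin n → Elem)) (a : Fin n → Elem) : Set (Fin n → Elem) :=
  {c ∈ r | keySet l c ⊆ keySet l a}

open Classical in
/-- `g(e)`, the set of entries of the tuple `g̅(e)`, for `e` branching with `d, f`. -/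
noncomputable def gSet (l : ℕ) (d e f : Fin n → Elem) : Set Elem :=
  if keySet l d ⊆ keySet l e ∧ ¬ keySet l f ⊆ keySet l e then keySet l d
  else if ¬ keySet l d ⊆ keySet l e ∧ keySet l f ⊆ keySet l e then keySet l f
  else if keySet l d ⊆ keySet l f ∧ keySet l f ⊆ keySet l e then keySet l d
  else if keySet l f ⊆ keySet l d ∧ keySet l d ⊆ keySet l e then keySet l f
  else keySet l e

/-- A tripath of `q`: a database `Θ`, each of whose blocks has at most two facts,
whose blocks (indexed by `Fin m`) are arranged as a rooted tree with exactly one root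
block and exactly two leaf blocks; the root block has the single fact `a(root)`, leaf
blocks have the single fact `b(leaf)`, all other blocks have exactly the two facts
`a(B) ≠ b(B)`; if `B` is the parent of `B'` then `Θ ⊨ q{a(B) b(B')}`; the (unique)
branching block `B` with its two children `B', B''` gives the center `d e f` =
`b(B') a(B) b(B'')` with `(d,e)` and `(e,f)` distinct solutions; and `g(e)` is not
included in the key of the root fact nor of either leaf fact. -/
structure Tripath (l : ℕ) (q : Query n Var) (Θ : Set (Fin n → Elem)) where
  finite : Θ.Finite
  m : ℕ
  blk : Fin m → Set (Fin n → Elem)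
  blk_is_block : ∀ i, ∃ x ∈ Θ, blk i = Block l Θ x
  blk_cover : Θ = ⋃ i, blk i
  blk_inj : Function.Injective blk
  blk_card : ∀ i, (blk i).ncard ≤ 2
  parent : Fin m → Option (Fin m)
  root : Fin m
  parent_root : parent root = none
  parent_ne_root : ∀ i, i ≠ root → ∃ j, parent i = some j
  reach_root : ∀ i, Relation.ReflTransGen (fun x y => parent x = some y) i root
  leaf1 : Fin m
  leaf2 : Fin m
  leaf_ne : leaf1 ≠ leaf2
  leaf1_leaf : ∀ j, parent j ≠ some leaf1
  leaf2_leaf : ∀ j, parent j ≠ some leaf2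
  leaves_eq : ∀ i, (∀ j, parent j ≠ some i) → i = leaf1 ∨ i = leaf2
  aFact : Fin m → (Fin n → Elem)
  bFact : Fin m → (Fin n → Elem)
  root_blk : blk root = {aFact root}
  leaf1_blk : blk leaf1 = {bFact leaf1}
  leaf2_blk : blk leaf2 = {bFact leaf2}
  other_blk : ∀ i, i ≠ root → i ≠ leaf1 → i ≠ leaf2 →
    aFact i ≠ bFact i ∧ blk i = {aFact i, bFact i}
  adj_sol : ∀ i j, parent j = some i → SolSym q Θ (aFact i) (bFact j)
  branch : Fin m
  child1 : Fin m
  child2 : Fin m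
  child_ne : child1 ≠ child2
  parent_child1 : parent child1 = some branch
  parent_child2 : parent child2 = some branch
  center_sol1 : Sol q Θ (bFact child1) (aFact branch)
  center_sol2 : Sol q Θ (aFact branch) (bFact child2)
  center_distinct : (bFact child1, aFact branch) ≠ (aFact branch, bFact child2)
  g_root : ¬ gSet l (bFact child1) (aFact branch) (bFact child2) ⊆ keySet l (aFact root)
  g_leaf1 : ¬ gSet l (bFact child1) (aFact branch) (bFact child2) ⊆ keySet l (bFact leaf1)
  g_leaf2 : ¬ gSet l (bFact child1) (aFact branch) (bFact child2) ⊆ keySet l (bFact leaf2)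

namespace Tripath

variable {l : ℕ} {q : Query n Var} {Θ : Set (Fin n → Elem)}

/-- The fact `d` of the center `def` of a tripath. -/
def dc (T : Tripath l q Θ) : Fin n → Elem := T.bFact T.child1
/-- The fact `e` of the center `def` of a tripath. -/
def ec (T : Tripath l q Θ) : Fin n → Elem := T.aFact T.branch
/-- The fact `f` of the center `def` of a tripath. -/
def fc (T : Tripath l q Θ) : Fin n → Elem := T.bFact T.child2
/-- The root fact `u₀` of a tripath. -/
def u0 (T : Tripath l q Θ) : Fin n → Elem := T.aFact T.root
/-- The leaf fact `u₁` of a tripath. -/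
def u1 (T : Tripath l q Θ) : Fin n → Elem := T.bFact T.leaf1
/-- The leaf fact `u₂` of a tripath. -/
def u2 (T : Tripath l q Θ) : Fin n → Elem := T.bFact T.leaf2

/-- The center of the tripath is a fork (`(f,d)` is not a solution). -/
def IsFork (T : Tripath l q Θ) : Prop := ¬ Sol q Θ T.fc T.dc

/-- The center of the tripath is a triangle (`(f,d)` is a solution). -/
def IsTriangle (T : Tripath l q Θ) : Prop := Sol q Θ T.fc T.dc

/-- Variable-niceness witnessed by the elements `x, y, z`. -/
def VariableNiceWith (T : Tripath l q Θ) (x y z : Elem) : Prop :=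
  x ∈ keySet l T.dc ∧ y ∈ keySet l T.ec ∧ z ∈ keySet l T.fc ∧
  ({x, y, z} : Set Elem) ∩ (keySet l T.u0 ∪ keySet l T.u1 ∪ keySet l T.u2) = ∅

/-- The tripath is variable-nice. -/
def VariableNice (T : Tripath l q Θ) : Prop := ∃ x y z, T.VariableNiceWith x y z

/-- The tripath is solution-nice: the only solutions to `q` in `Θ` are those between a
parent block and a child block, plus possibly `(f, d)`. -/
def SolutionNice (T : Tripath l q Θ) : Prop :=
  ∀ a b, Sol q Θ a b →
    (∃ i j, T.parent j = some i ∧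
      ((a = T.aFact i ∧ b = T.bFact j) ∨ (a = T.bFact j ∧ b = T.aFact i)))
    ∨ (a = T.fc ∧ b = T.dc)

/-- The tripath is nice. -/
def Nice (T : Tripath l q Θ) : Prop :=
  (∃ x y z : Elem, T.VariableNiceWith x y z ∧
    ∃ w ∈ ({x, y, z} : Set Elem),
      ∀ c ∈ Θ, c ≠ T.u0 → c ≠ T.u1 → c ≠ T.u2 → w ∈ keySet l c) ∧
  T.SolutionNice ∧
  (∀ u ∈ ({T.u0, T.u1, T.u2} : Set (Fin n → Elem)),
    ∃ w ∈ keySet l u, ∀ c ∈ Θ, c ≠ u → w ∉ keySet l c)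

end Tripath

/-- `D` contains a tripath of `q`: some subset of `D` is a tripath of `q`. -/
def ContainsTripath (l : ℕ) (q : Query n Var) (D : Set (Fin n → Elem)) : Prop :=
  ∃ Θ ⊆ D, Nonempty (Tripath l q Θ)

/-- `q` admits a fork-tripath (over databases with elements in `Elem`). -/
def AdmitsForkTripath (l : ℕ) (q : Query n Var) (Elem : Type*) : Prop :=
  ∃ D : Set (Fin n → Elem), D.Finite ∧ ∃ Θ ⊆ D, ∃ T : Tripath l q Θ, T.IsFork

/-- `q` admits a triangle-tripath (over databases with elements in `Elem`). -/
def AdmitsTriangleTripath (l : ℕ) (q : Query n Var) (Elem : Type*) : Prop :=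
  ∃ D : Set (Fin n → Elem), D.Finite ∧ ∃ Θ ⊆ D, ∃ T : Tripath l q Θ, T.IsTriangle

/-- `q` admits a tripath (over databases with elements in `Elem`). -/
def AdmitsTripath (l : ℕ) (q : Query n Var) (Elem : Type*) : Prop :=
  ∃ D : Set (Fin n → Elem), D.Finite ∧ ContainsTripath l q D

/-- Edges of the solution graph `G(D,q)`: distinct facts `a, b` of `D` with `D ⊨ q{ab}`. -/
def gEdge (q : Query n Var) (D : Set (Fin n → Elem)) (a b : Fin n → Elem) : Prop :=
  a ≠ b ∧ a ∈ D ∧ b ∈ D ∧ SolSym q D a b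

/-- The connected component of the fact `a` in the solution graph `G(D,q)`. -/
def gComp (q : Query n Var) (D : Set (Fin n → Elem)) (a : Fin n → Elem) :
    Set (Fin n → Elem) :=
  {b ∈ D | Relation.ReflTransGen (gEdge q D) a b}

/-- `C` is a quasi-clique (of the solution graph of `D`): any two non-key-equal facts of
`C` are joined by an edge. -/
def QuasiClique (l : ℕ) (q : Query n Var) (D : Set (Fin n → Elem))
    (C : Set (Fin n → Elem)) : Prop :=
  ∀ a ∈ C, ∀ b ∈ C, ¬ keyEq l a b → SolSym q D a b

open Classical in
/-- `clique(a)`: the connected component of `a` in `G(D,q)` if it is a quasi-clique, and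
`{a}` otherwise. -/
noncomputable def cliqueOf (l : ℕ) (q : Query n Var) (D : Set (Fin n → Elem))
    (a : Fin n → Elem) : Set (Fin n → Elem) :=
  if QuasiClique l q D (gComp q D a) then gComp q D a else {a}

/-- Edges of the bipartite graph `H(D,q)`: between a block `B` of `D` and a set `c` of
the form `clique(y)`, when `B` contains a fact `a ∈ c` with `(a,a)` not a solution. -/
def HEdge (l : ℕ) (q : Query n Var) (D : Set (Fin n → Elem))
    (B c : Set (Fin n → Elem)) : Prop :=
  (∃ x ∈ D, B = Block l D x) ∧ (∃ y ∈ D, c = cliqueOf l q D y) ∧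
  ∃ a ∈ B, a ∈ c ∧ ¬ Sol q D a a

/-- `H(D,q)` admits a matching saturating the set `V₁` of blocks of `D`: an injective
assignment of an `H`-edge to every block. -/
def SaturatingMatching (l : ℕ) (q : Query n Var) (D : Set (Fin n → Elem)) : Prop :=
  ∃ M : Set (Fin n → Elem) → Set (Fin n → Elem),
    (∀ x ∈ D, HEdge l q D (Block l D x) (M (Block l D x))) ∧
    (∀ x ∈ D, ∀ y ∈ D, M (Block l D x) = M (Block l D y) → Block l D x = Block l D y)

/-- `D` is a clique-database for `q`: every connected component of `G(D,q)` is a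
quasi-clique. -/
def CliqueDB (l : ℕ) (q : Query n Var) (D : Set (Fin n → Elem)) : Prop :=
  ∀ a ∈ D, QuasiClique l q D (gComp q D a)

/-- `q` is a clique-query: every database (over `Elem`) is a clique-database for `q`. -/
def CliqueQuery (l : ℕ) (q : Query n Var) (Elem : Type*) : Prop :=
  ∀ D : Set (Fin n → Elem), D.Finite → CliqueDB l q D

/-- One step of `q`-connectedness between (the blocks of) two facts of `D`:
either they are in the same block, or some fact of the block of `x` and some fact
of the block of `y` form a solution. -/
def qConnRel (l : ℕ) (q : Query n Var) (D : Set (Fin n → Elem))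
    (x y : Fin n → Elem) : Prop :=
  keyEq l x y ∨ ∃ a b, a ∈ Block l D x ∧ b ∈ Block l D y ∧ SolSym q D a b

/-- The blocks of `x` and of `y` are `q`-connected in `D`
(reflexive-symmetric-transitive closure). -/
def qConn (l : ℕ) (q : Query n Var) (D : Set (Fin n → Elem))
    (x y : Fin n → Elem) : Prop :=
  Relation.EqvGen (qConnRel l q D) x y

/-- The `q`-connected component of (the block of) the fact `x` in `D`. -/
def qComponent (l : ℕ) (q : Query n Var) (D : Set (Fin n → Elem))
    (x : Fin n → Elem) : Set (Fin n → Elem) :=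
  {y ∈ D | qConn l q D x y}

end CQA

namespace CQA

variable {n : ℕ} {Elem Var : Type*}

/-- Key-equality for labeled (two-relation) facts: same relation symbol (`true` for
`R₁`, `false` for `R₂`) and key-equal tuples. -/
def keyEq2 (l : ℕ) (s t : Bool × (Fin n → Elem)) : Prop :=
  s.1 = t.1 ∧ keyEq l s.2 t.2

/-- Consistency of a two-relation database. -/
def Consistent2 (l : ℕ) (D : Set (Bool × (Fin n → Elem))) : Prop :=
  ∀ a ∈ D, ∀ b ∈ D, keyEq2 l a b → a = b

/-- Repairs of a two-relation database. -/
def Repair2 (l : ℕ) (D r : Set (Bool × (Fin n → Elem))) : Prop :=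
  r ⊆ D ∧ Consistent2 l r ∧ ∀ s, r ⊆ s → s ⊆ D → Consistent2 l s → s = r

/-- A two-relation database satisfies `sjf(q)`: an `R₁`-fact matching `A` and an
`R₂`-fact matching `B` via a common assignment. -/
def SatSjf (q : Query n Var) (D : Set (Bool × (Fin n → Elem))) : Prop :=
  ∃ a b : Fin n → Elem, (true, a) ∈ D ∧ (false, b) ∈ D ∧ solPair q a b

/-- `D ⊨ certain(sjf(q))` for a two-relation database. -/
def CertainSjf (l : ℕ) (q : Query n Var) (D : Set (Bool × (Fin n → Elem))) : Prop :=
  ∀ r, Repair2 l D r → SatSjf q r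

/-- The translation `μ` of a labeled fact into an `R`-fact whose elements are pairs in
`Var × Elem`: position `i` of the image of an `R₁`-fact (resp. `R₂`-fact) `u` carries
the pair of the variable `A[i]` (resp. `B[i]`) and the element `u[i]`. -/
def muFact (q : Query n Var) (a : Bool × (Fin n → Elem)) : Fin n → Var × Elem :=
  fun i => (if a.1 then q.1 i else q.2 i, a.2 i)


/-! The key tuples of `A` and `B` differ, so the variable components of `μ`-images on the
key positions remember the relation symbol; hence `μ` is injective and turns labeled
key-equality into key-equality, and `r ↦ μ(r)` is a bijection between the repairs of `D` and
those of `D'`. A solution `(μ a, μ b)` of `q` forces `a` to be an `R₁`-fact and `b` an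
`R₂`-fact, since otherwise the variable components of the assignment would be a
homomorphism between `A` and `B`; projecting the assignment to its element components gives
a solution of `sjf(q)`. -/

section Translation

variable {n l : ℕ} {Elem Var : Type*} {q : Query n Var}

@[simp]
lemma muFact_fst (a : Bool × (Fin n → Elem)) (i : Fin n) :
    (muFact q a i).1 = if a.1 then q.1 i else q.2 i := rfl

lemma label_eq_of_keyEq_muFact (hkey : ¬ keyEq l q.1 q.2) {a b : Bool × (Fin n → Elem)}
    (h : keyEq l (muFact q a) (muFact q b)) : a.1 = b.1 := by
  by_contra hab
  refine hkey fun i hi => ?_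
  have hvar := congrArg Prod.fst (h i hi)
  obtain ⟨_ | _, _⟩ := a <;> obtain ⟨_ | _, _⟩ := b
  · exact absurd rfl hab
  · simpa using hvar.symm
  · simpa using hvar
  · exact absurd rfl hab

lemma keyEq_muFact_iff (hkey : ¬ keyEq l q.1 q.2) (a b : Bool × (Fin n → Elem)) :
    keyEq l (muFact q a) (muFact q b) ↔ keyEq2 l a b := by
  refine ⟨fun h => ⟨label_eq_of_keyEq_muFact hkey h, fun i hi => ?_⟩, ?_⟩
  · exact congrArg Prod.snd (h i hi)
  · rintro ⟨hlabel, hk⟩ i hi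
    simp [muFact, hlabel, hk i hi]

lemma muFact_injective (hkey : ¬ keyEq l q.1 q.2) :
    Function.Injective (muFact (Elem := Elem) q) := by
  intro a b h
  have hkeyEq : keyEq l (muFact q a) (muFact q b) := fun i _ => congrFun h i
  exact Prod.ext (label_eq_of_keyEq_muFact hkey hkeyEq)
    (funext fun i => congrArg Prod.snd (congrFun h i))

lemma consistent_image_muFact_iff (hkey : ¬ keyEq l q.1 q.2)
    (r : Set (Bool × (Fin n → Elem))) :
    Consistent l (muFact q '' r) ↔ Consistent2 l r := by
  constructor
  · intro hc a ha b hb hab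
    exact muFact_injective hkey
      (hc _ ⟨a, ha, rfl⟩ _ ⟨b, hb, rfl⟩ ((keyEq_muFact_iff hkey a b).mpr hab))
  · rintro hc _ ⟨a, ha, rfl⟩ _ ⟨b, hb, rfl⟩ hab
    exact congrArg _ (hc a ha b hb ((keyEq_muFact_iff hkey a b).mp hab))

lemma repair_image_muFact_iff (hkey : ¬ keyEq l q.1 q.2)
    (D r : Set (Bool × (Fin n → Elem))) :
    Repair l (muFact q '' D) (muFact q '' r) ↔ Repair2 l D r := by
  have hinj := muFact_injective (Elem := Elem) hkey
  simp only [Repair, Repair2, Set.image_subset_image_iff hinj,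
    consistent_image_muFact_iff hkey]
  refine and_congr_right fun _ => and_congr_right fun _ => ⟨fun hmax s hrs hsD hs => ?_,
    fun hmax s' hrs' hs'D hs' => ?_⟩
  · exact Set.image_injective.mpr hinj <| hmax _ (Set.image_mono hrs) (Set.image_mono hsD)
      ((consistent_image_muFact_iff hkey s).mpr hs)
  · obtain ⟨s, -, rfl⟩ := Set.subset_image_iff.mp hs'D
    rw [Set.image_subset_image_iff hinj] at hrs'
    rw [hmax s hrs' ((Set.image_subset_image_iff hinj).mp hs'D)
      ((consistent_image_muFact_iff hkey s).mp hs')]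

lemma solPair_muFact_iff (a b : Fin n → Elem) :
    solPair q (muFact q (true, a)) (muFact q (false, b)) ↔ solPair q a b := by
  constructor
  · rintro ⟨ν, hA, hB⟩
    exact ⟨fun v => (ν v).2, fun i => congrArg Prod.snd (hA i),
      fun i => congrArg Prod.snd (hB i)⟩
  · rintro ⟨ν, hA, hB⟩
    exact ⟨fun v => (v, ν v), fun i => by simp [muFact, hA i], fun i => by simp [muFact, hB i]⟩

lemma labels_of_solPair_muFact (hAB : ¬ ∃ h : Var → Var, ∀ i, h (q.1 i) = q.2 i)
    (hBA : ¬ ∃ h : Var → Var, ∀ i, h (q.2 i) = q.1 i) {a b : Bool × (Fin n → Elem)}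
    (h : solPair q (muFact q a) (muFact q b)) : a.1 = true ∧ b.1 = false := by
  obtain ⟨ν, hA, hB⟩ := h
  constructor
  · by_contra ha
    exact hAB ⟨fun v => (ν v).1, fun i => by simpa [ha] using congrArg Prod.fst (hA i)⟩
  · by_contra hb
    exact hBA ⟨fun v => (ν v).1, fun i => by simpa [hb] using congrArg Prod.fst (hB i)⟩

lemma sat_image_muFact_iff (hAB : ¬ ∃ h : Var → Var, ∀ i, h (q.1 i) = q.2 i)
    (hBA : ¬ ∃ h : Var → Var, ∀ i, h (q.2 i) = q.1 i) (r : Set (Bool × (Fin n → Elem))) :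
    Sat q (muFact q '' r) ↔ SatSjf q r := by
  constructor
  · rintro ⟨-, -, ⟨⟨x, a⟩, ha, rfl⟩, ⟨⟨y, b⟩, hb, rfl⟩, hsol⟩
    obtain ⟨rfl, rfl⟩ := labels_of_solPair_muFact hAB hBA hsol
    exact ⟨a, b, ha, hb, (solPair_muFact_iff a b).mp hsol⟩
  · rintro ⟨a, b, ha, hb, hsol⟩
    exact ⟨_, _, ⟨_, ha, rfl⟩, ⟨_, hb, rfl⟩, (solPair_muFact_iff a b).mpr hsol⟩

end Translation

end CQA

theorem sjf_reduction (n l : ℕ)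
    (Elem Var : Type)
    (q : CQA.Query n Var)
    (hkey : ¬ CQA.keyEq l q.1 q.2)
    (hAB : ¬ ∃ h : Var → Var, ∀ i, h (q.1 i) = q.2 i)
    (hBA : ¬ ∃ h : Var → Var, ∀ i, h (q.2 i) = q.1 i)
    (D : Set (Bool × (Fin n → Elem))) :
    CQA.CertainSjf l q D ↔ CQA.Certain l q (CQA.muFact q '' D) := by
  constructor
  · intro hcert r' hr'
    obtain ⟨r, -, rfl⟩ := Set.subset_image_iff.mp hr'.1
    exact (CQA.sat_image_muFact_iff hAB hBA r).mpr
      (hcert r ((CQA.repair_image_muFact_iff hkey D r).mp hr'))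
  · intro hcert r hr
    exact (CQA.sat_image_muFact_iff hAB hBA r).mp
      (hcert _ ((CQA.repair_image_muFact_iff hkey D r).mpr hr))
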